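/- Let X = {x, y, z, w} be a set of four distinct alternatives, 𝓑 = {{x, z}, {x, y, w}, {y, w}}, and let c be the choice function with c({x, z}) = x, c({x, y, w}) = x, and c({y, w}) = y. Then: (a) for every rationalizing pair (≻, Γ) witnessing that (𝓑, c) is rationalizable with 2nd order CLA, one has |{a ∈ X : x ≻ a}| ≥ 2 (x is revealed to be at least second best); and (b) there exists such a rationalizing pair with |{a ∈ X : x ≻ a}| = 2, so x need not be ≻-maximal. -/

import Mathlib

/-- A strict preference relation: complete on distinct elements, transitive, asymmetric. -/
def StrictPref {X : Type*} (r : X → X → Prop) : Prop :=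
  (∀ x y : X, x ≠ y → r x y ∨ r y x) ∧
  (∀ x y z : X, r x y → r y z → r x z) ∧
  (∀ x y : X, r x y → ¬ r y x)

/-- An attention filter: for every nonempty budget `B`, `Γ B` is a nonempty subset of `B`,
and removing an unconsidered alternative does not change the consideration set. -/
def AttentionFilter {X : Type*} [DecidableEq X] (Γ : Finset X → Finset X) : Prop :=
  ∀ B : Finset X, B.Nonempty →
    (Γ B).Nonempty ∧ Γ B ⊆ B ∧ ∀ x ∈ B, x ∉ Γ B → Γ (B.erase x) = Γ B

/-- `(r, Γ)` is a rationalizing pair for the data set `(𝓑, c)` with `k`-th order CLA. -/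
def Rationalizes {X : Type*} [DecidableEq X] (𝓑 : Set (Finset X)) (c : Finset X → X)
    (k : ℕ) (r : X → X → Prop) (Γ : Finset X → Finset X) : Prop :=
  StrictPref r ∧ AttentionFilter Γ ∧
  (∀ B : Finset X, B.Nonempty → min B.card k ≤ (Γ B).card) ∧
  ∀ B ∈ 𝓑, c B ∈ Γ B ∧ ∀ y ∈ Γ B, y ≠ c B → r (c B) y

/-- The data set `(𝓑, c)` is rationalizable with `k`-th order CLA. -/
def RationalizableCLA {X : Type*} [DecidableEq X] (𝓑 : Set (Finset X))
    (c : Finset X → X) (k : ℕ) : Prop :=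
  ∃ (r : X → X → Prop) (Γ : Finset X → Finset X), Rationalizes 𝓑 c k r Γ

/-!
A budget with at most two alternatives is considered in full under 2nd order CLA, so `x`, chosen
from `{x, z}`, beats `z`. In `{x, y, w}` at least two alternatives are considered, so `x` also beats
one of `y`, `w`; hence `x` beats at least two alternatives. Conversely, the ranking
`y ≻ x ≻ z ≻ w` together with the attention filter that overlooks `y` in budgets of more than two
alternatives rationalizes the data, and there `x` beats only `z` and `w`.
-/

open Function

theorem strictPref_of_injective {X α : Type*} [LinearOrder α] {f : X → α} (hf : Injective f) :
    StrictPref (fun a b => f a < f b) :=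
  ⟨fun _ _ hab => (hf.ne hab).lt_or_gt, fun _ _ _ => lt_trans, fun _ _ => lt_asymm⟩

section Ignoring

variable {X : Type*} [DecidableEq X]

def ignoring (a : X) (k : ℕ) (B : Finset X) : Finset X :=
  if a ∈ B ∧ k < B.card then B.erase a else B

theorem ignoring_of_notMem {a : X} {B : Finset X} (k : ℕ) (ha : a ∉ B) : ignoring a k B = B :=
  if_neg fun h => ha h.1

theorem ignoring_of_card_le (a : X) {k : ℕ} {B : Finset X} (hB : B.card ≤ k) :
    ignoring a k B = B :=
  if_neg fun h => (hB.trans_lt h.2).false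

theorem ignoring_of_lt_card {a : X} {k : ℕ} {B : Finset X} (ha : a ∈ B) (hB : k < B.card) :
    ignoring a k B = B.erase a :=
  if_pos ⟨ha, hB⟩

theorem attentionFilter_ignoring (a : X) {k : ℕ} (hk : 0 < k) : AttentionFilter (ignoring a k) := by
  intro B hB
  unfold ignoring
  split_ifs with h
  · refine ⟨?_, B.erase_subset a, fun b hb hbΓ => ?_⟩
    · rw [← Finset.card_pos, Finset.card_erase_of_mem h.1]
      omega
    · obtain rfl : b = a := by_contra fun hba => hbΓ (Finset.mem_erase.2 ⟨hba, hb⟩)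
      exact ignoring_of_notMem k (B.notMem_erase b)
  · exact ⟨hB, subset_rfl, fun b hb hbΓ => absurd hb hbΓ⟩

theorem min_card_le_card_ignoring (a : X) (k : ℕ) (B : Finset X) :
    min B.card k ≤ (ignoring a k B).card := by
  unfold ignoring
  split_ifs with h
  · rw [Finset.card_erase_of_mem h.1]
    omega
  · exact min_le_left _ _

end Ignoring

namespace Rationalizes

variable {X : Type*} [DecidableEq X] {𝓑 : Set (Finset X)} {c : Finset X → X} {k : ℕ}
  {r : X → X → Prop} {Γ : Finset X → Finset X} {B : Finset X}

theorem attention_eq_of_card_le (h : Rationalizes 𝓑 c k r Γ) (hB : B.Nonempty)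
    (hBk : B.card ≤ k) : Γ B = B := by
  refine Finset.eq_of_subset_of_card_le ((h.2.1 B hB).2.1) ?_
  simpa [min_eq_left hBk] using h.2.2.1 B hB

theorem rel_of_card_le (h : Rationalizes 𝓑 c k r Γ) (hB : B ∈ 𝓑) (hBk : B.card ≤ k) {t : X}
    (ht : t ∈ B) (htc : t ≠ c B) : r (c B) t := by
  refine (h.2.2.2 B hB).2 t ?_ htc
  rwa [h.attention_eq_of_card_le ⟨t, ht⟩ hBk]

theorem exists_rel_of_two_le (h : Rationalizes 𝓑 c k r Γ) (hB : B ∈ 𝓑) (hk : 2 ≤ k)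
    (hBc : 2 ≤ B.card) : ∃ t ∈ B, t ≠ c B ∧ r (c B) t := by
  have hne : B.Nonempty := Finset.card_pos.1 (by omega)
  have hΓ : 1 < (Γ B).card := by
    have := h.2.2.1 B hne
    omega
  obtain ⟨t, ht, htc⟩ := Finset.exists_mem_ne hΓ (c B)
  exact ⟨t, (h.2.1 B hne).2.1 ht, htc, (h.2.2.2 B hB).2 t ht htc⟩

theorem two_le_ncard_of_mem_pair [Finite X] {x z : X} (h : Rationalizes 𝓑 c 2 r Γ)
    (hxz : x ≠ z) (hxz𝓑 : {x, z} ∈ 𝓑)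
    (hB : B ∈ 𝓑) (hcxz : c {x, z} = x) (hcB : c B = x) (hzB : z ∉ B) (hBc : 2 ≤ B.card) :
    2 ≤ {a | r x a}.ncard := by
  have hrz : r x z := by
    simpa [hcxz] using h.rel_of_card_le hxz𝓑 (Finset.card_pair hxz).le (t := z) (by simp)
      (by simpa [hcxz] using hxz.symm)
  obtain ⟨t, htB, htx, hrt⟩ := h.exists_rel_of_two_le hB le_rfl hBc
  rw [hcB] at htx hrt
  have hzt : z ≠ t := fun hzt => hzB (hzt ▸ htB)
  calc 2 = ({z, t} : Set X).ncard := (Set.ncard_pair hzt).symm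
    _ ≤ {a | r x a}.ncard := Set.ncard_le_ncard (by rintro a (rfl | rfl) <;> assumption)

end Rationalizes

theorem example_second_best {X : Type*} [Fintype X] [DecidableEq X] (x y z w : X)
    (hxy : x ≠ y) (hxz : x ≠ z) (hxw : x ≠ w)
    (hyz : y ≠ z) (hyw : y ≠ w) (hzw : z ≠ w)
    (huniv : ∀ a : X, a = x ∨ a = y ∨ a = z ∨ a = w)
    (c : Finset X → X)
    (h1 : c {x, z} = x) (h2 : c {x, y, w} = x) (h3 : c {y, w} = y) :
    (∀ (r : X → X → Prop) (Γ : Finset X → Finset X),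
        Rationalizes ({{x, z}, {x, y, w}, {y, w}} : Set (Finset X)) c 2 r Γ →
        2 ≤ Set.ncard {a : X | r x a}) ∧
    (∃ (r : X → X → Prop) (Γ : Finset X → Finset X),
        Rationalizes ({{x, z}, {x, y, w}, {y, w}} : Set (Finset X)) c 2 r Γ ∧
        Set.ncard {a : X | r x a} = 2) := by
  refine ⟨fun r Γ h => h.two_le_ncard_of_mem_pair hxz (by simp) (B := {x, y, w}) (by simp) h1 h2
    (by simp [hxz.symm, hyz.symm, hzw]) (Finset.one_lt_card.2 ⟨x, by simp, y, by simp, hxy⟩), ?_⟩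
  set rank : X → ℕ := fun a => if a = y then 0 else if a = x then 1 else if a = z then 2 else 3
  have hy : rank y = 0 := by simp [rank]
  have hx : rank x = 1 := by simp [rank, hxy]
  have hz : rank z = 2 := by simp [rank, hyz.symm, hxz.symm]
  have hw : rank w = 3 := by simp [rank, hyw.symm, hxw.symm, hzw.symm]
  have hinj : Injective rank := by
    intro a b hab
    rcases huniv a with rfl | rfl | rfl | rfl <;> rcases huniv b with rfl | rfl | rfl | rfl <;>
      simp_all
  have hbeaten : {a | rank x < rank a} = {z, w} := by
    ext a
    rcases huniv a with rfl | rfl | rfl | rfl <;> simp [hx, hy, hz, hw, hxz, hxw, hyz, hyw, hzw]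
  refine ⟨fun a b => rank a < rank b, ignoring y 2, ⟨strictPref_of_injective hinj,
    attentionFilter_ignoring y two_pos, fun B _ => min_card_le_card_ignoring y 2 B, ?_⟩,
    by rw [hbeaten, Set.ncard_pair hzw]⟩
  simp only [Set.mem_insert_iff, Set.mem_singleton_iff]
  rintro B (rfl | rfl | rfl)
  · rw [ignoring_of_notMem 2 (by simp [hxy.symm, hyz]), h1]
    simp [hx, hz]
  · rw [ignoring_of_lt_card (by simp) (by simp [Finset.card_insert_of_notMem, hxy, hxw, hyw]), h2,
      Finset.erase_insert_of_ne hxy, Finset.erase_insert (by simpa using hyw)]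
    simp [hx, hw]
  · rw [ignoring_of_card_le y (Finset.card_pair hyw).le, h3]
    simp [hy, hw]
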